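/- arXiv:2304.13328 — 4 statements merged into one kernel-verified Lean document; each statement's English description precedes it below -/
import Mathlib

section
/- Let E(w,y) = F(w) + (r/2)‖y‖² where F : ℝᵖ → ℝ is locally Lipschitz and path differentiable with conservative gradient D_F, and r > 0. If (w,y) : [0,T] → ℝᵖ × ℝᵖ is an absolutely continuous solution of the differential inclusion ẇ = -r y, ẏ ∈ D_F(w) - y, then E(w(T), y(T)) - E(w(0), y(0)) = -∫₀ᵀ r ‖y(t)‖² dt. -/
open MeasureTheory

/-!
Along a solution, `d/dt F(w) = ⟪v, -r y⟫` and `d/dt (r/2)‖y‖² = r ⟪y, v - y⟫` for the same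
`v ∈ D_F(w)`, so the terms involving `v` cancel and the energy has derivative `-r‖y‖²`.
The identity is then the fundamental theorem of calculus on `[0, T]`.
-/

section HeavyBall

variable {E : Type*} [NormedAddCommGroup E] [InnerProductSpace ℝ E]

noncomputable def heavyBallEnergy (F : E → ℝ) (r : ℝ) (w y : E) : ℝ := F w + r / 2 * ‖y‖ ^ 2

theorem hasDerivAt_heavyBallEnergy {F : E → ℝ} {r t : ℝ} {w y : ℝ → E} {v : E}
    (hF : HasDerivAt (fun s => F (w s)) (inner ℝ v (-(r • y t))) t)
    (hy : HasDerivAt y (v - y t) t) :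
    HasDerivAt (fun s => heavyBallEnergy F r (w s) (y s)) (-(r * ‖y t‖ ^ 2)) t := by
  refine (hF.add (hy.norm_sq.const_mul (r / 2))).congr_deriv ?_
  simp only [inner_neg_right, inner_smul_right, inner_sub_right, real_inner_self_eq_norm_sq,
    real_inner_comm v]
  ring

end HeavyBall

theorem energy_decay_identity_general {p : ℕ}
    (F : EuclideanSpace ℝ (Fin p) → ℝ)
    (D_F : EuclideanSpace ℝ (Fin p) → Set (EuclideanSpace ℝ (Fin p)))
    (r T : ℝ) (hT : 0 ≤ T)
    (w y w' y' : ℝ → EuclideanSpace ℝ (Fin p))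
    (hy : ∀ t ∈ Set.Icc (0:ℝ) T, HasDerivAt y (y' t) t)
    (hw' : ∀ t ∈ Set.Icc (0:ℝ) T, w' t = -(r • y t))
    (hy' : ∀ t ∈ Set.Icc (0:ℝ) T, ∃ v ∈ D_F (w t), y' t = v - y t)
    (hchain : ∀ t ∈ Set.Icc (0:ℝ) T, ∀ v ∈ D_F (w t),
      HasDerivAt (fun s => F (w s)) ((inner ℝ v (w' t) : ℝ)) t) :
    (F (w T) + (r / 2) * ‖y T‖ ^ 2) - (F (w 0) + (r / 2) * ‖y 0‖ ^ 2)
      = -∫ t in (0:ℝ)..T, r * ‖y t‖ ^ 2 := by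
  have hI : Set.uIcc 0 T = Set.Icc 0 T := Set.uIcc_of_le hT
  have henergy : ∀ t ∈ Set.uIcc 0 T,
      HasDerivAt (fun s => heavyBallEnergy F r (w s) (y s)) (-(r * ‖y t‖ ^ 2)) t := by
    rw [hI]
    intro t ht
    obtain ⟨v, hv, hy'v⟩ := hy' t ht
    apply hasDerivAt_heavyBallEnergy (v := v)
    · rw [← hw' t ht]
      exact hchain t ht v hv
    · rw [← hy'v]
      exact hy t ht
  have hcont : ContinuousOn (fun t => -(r * ‖y t‖ ^ 2)) (Set.uIcc 0 T) := by
    rw [hI]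
    exact (continuousOn_of_forall_continuousAt fun t ht =>
      ((hy t ht).continuousAt.norm.pow 2).const_mul r).neg
  rw [← intervalIntegral.integral_neg,
    intervalIntegral.integral_eq_sub_of_hasDerivAt henergy hcont.intervalIntegrable]
  rfl

/-- Energy decay identity along solutions of the heavy ball differential inclusion
`ẇ = -ry`, `ẏ ∈ D_F(w) - y`, where `D_F` is a conservative gradient for `F`
(expressed through the chain rule hypothesis along the solution curve `w`). -/
theorem energy_decay_identity {p : ℕ}
    (F : EuclideanSpace ℝ (Fin p) → ℝ)
    (D_F : EuclideanSpace ℝ (Fin p) → Set (EuclideanSpace ℝ (Fin p)))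
    (hlip : LocallyLipschitz F)
    (r T : ℝ) (hr : 0 < r) (hT : 0 ≤ T)
    (w y w' y' : ℝ → EuclideanSpace ℝ (Fin p))
    (hw : ∀ t ∈ Set.Icc (0:ℝ) T, HasDerivAt w (w' t) t)
    (hy : ∀ t ∈ Set.Icc (0:ℝ) T, HasDerivAt y (y' t) t)
    (hw' : ∀ t ∈ Set.Icc (0:ℝ) T, w' t = -(r • y t))
    (hy' : ∀ t ∈ Set.Icc (0:ℝ) T, ∃ v ∈ D_F (w t), y' t = v - y t)
    (hchain : ∀ t ∈ Set.Icc (0:ℝ) T, ∀ v ∈ D_F (w t),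
      HasDerivAt (fun s => F (w s)) ((inner ℝ v (w' t) : ℝ)) t) :
    (F (w T) + (r / 2) * ‖y T‖ ^ 2) - (F (w 0) + (r / 2) * ‖y 0‖ ^ 2)
      = -∫ t in (0:ℝ)..T, r * ‖y t‖ ^ 2 :=
  energy_decay_identity_general F D_F r T hT w y w' y' hy hw' hy' hchain
end

section
/- Let (w,y) be a solution of ẇ = -ry, ẏ ∈ D_F(w) - y with y(0) = 0 and suppose there exists t > 0 with E(w(t),y(t)) = E(w(0),y(0)), where E(w,y) = F(w) + (r/2)‖y‖². Then y(s) = 0 for all s ∈ [0,t], and consequently 0 ∈ D_F(w(0)). -/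
/-!
Along the flow, `E(w,y) = F(w) + (r/2)‖y‖²` has derivative `-r‖y‖² ≤ 0`, because the
`D_F(w)`-terms contributed by `F ∘ w` and by `‖y‖²` cancel. So `E` is antitone on `[0,t]`;
taking equal values at the endpoints it is constant, its derivative vanishes, and
`y = 0` on `(0,t)`, hence on `[0,t]` by continuity. Then `ẏ(0) = 0` and the inclusion
`ẏ(0) ∈ D_F(w(0)) - y(0)` reads `0 ∈ D_F(w(0))`.
-/

open Set

section InertialEnergy

variable {V : Type*} [NormedAddCommGroup V] [InnerProductSpace ℝ V]

noncomputable def inertialEnergy (F : V → ℝ) (r : ℝ) (w y : V) : ℝ := F w + r / 2 * ‖y‖ ^ 2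

theorem hasDerivAt_inertialEnergy {F : V → ℝ} {w y : ℝ → V} {v y' : V} {r s : ℝ}
    (hF : HasDerivAt (fun τ => F (w τ)) (inner ℝ v (-(r • y s))) s)
    (hy : HasDerivAt y y' s) (hy' : y' = v - y s) :
    HasDerivAt (fun τ => inertialEnergy F r (w τ) (y τ)) (-(r * ‖y s‖ ^ 2)) s := by
  refine (hF.add (hy.norm_sq.const_mul (r / 2))).congr_deriv ?_
  rw [hy', inner_neg_right, real_inner_smul_right, inner_sub_right, real_inner_self_eq_norm_sq,
    real_inner_comm]
  ring

end InertialEnergy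

theorem AntitoneOn.eq_left_of_eq_right {f : ℝ → ℝ} {a b : ℝ} (hf : AntitoneOn f (Icc a b))
    (hab : f b = f a) : ∀ s ∈ Icc a b, f s = f a := fun _ hs =>
  le_antisymm (hf (left_mem_Icc.2 (hs.1.trans hs.2)) hs hs.1)
    (hab ▸ hf hs (right_mem_Icc.2 (hs.1.trans hs.2)) hs.2)

theorem hasDerivAt_eq_zero_of_nonpos_of_eq {g g' : ℝ → ℝ} {a b : ℝ}
    (hg : ∀ s ∈ Icc a b, HasDerivAt g (g' s) s) (hg' : ∀ s ∈ Ioo a b, g' s ≤ 0)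
    (hab : g b = g a) : ∀ s ∈ Ioo a b, g' s = 0 := by
  have hanti : AntitoneOn g (Icc a b) := by
    refine antitoneOn_of_hasDerivWithinAt_nonpos (f' := g') (convex_Icc a b)
      (fun s hs => (hg s hs).continuousAt.continuousWithinAt) ?_ ?_ <;> rw [interior_Icc]
    · exact fun s hs => (hg s (Ioo_subset_Icc_self hs)).hasDerivWithinAt
    · exact hg'
  intro s hs
  have hconst : g =ᶠ[nhds s] fun _ => g a :=
    Filter.eventually_of_mem (Ioo_mem_nhds hs.1 hs.2) fun τ hτ =>
      hanti.eq_left_of_eq_right hab τ (Ioo_subset_Icc_self hτ)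
  exact (hg s (Ioo_subset_Icc_self hs)).unique
    ((hasDerivAt_const s (g a)).congr_of_eventuallyEq hconst)

theorem HasDerivAt.eq_zero_of_eqOn_Icc {E : Type*} [NormedAddCommGroup E] [NormedSpace ℝ E]
    {f : ℝ → E} {f' c : E} {a b s : ℝ} (hf : HasDerivAt f f' s) (hab : a < b)
    (hfc : EqOn f (fun _ => c) (Icc a b)) (hs : s ∈ Icc a b) : f' = 0 :=
  (uniqueDiffOn_Icc hab s hs).eq_deriv _ hf.hasDerivWithinAt
    ((hasDerivWithinAt_const s _ c).congr hfc (hfc hs))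

theorem energy_conservation_implies_critical_general {p : ℕ}
    (F : EuclideanSpace ℝ (Fin p) → ℝ)
    (D_F : EuclideanSpace ℝ (Fin p) → Set (EuclideanSpace ℝ (Fin p)))
    (r : ℝ) (hr : 0 < r)
    (t : ℝ) (ht : 0 < t)
    (w y w' y' : ℝ → EuclideanSpace ℝ (Fin p))
    (hy : ∀ s ∈ Set.Icc (0:ℝ) t, HasDerivAt y (y' s) s)
    (hw' : ∀ s ∈ Set.Icc (0:ℝ) t, w' s = -(r • y s))
    (hy' : ∀ s ∈ Set.Icc (0:ℝ) t, ∃ v ∈ D_F (w s), y' s = v - y s)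
    (hchain : ∀ s ∈ Set.Icc (0:ℝ) t, ∀ v ∈ D_F (w s),
      HasDerivAt (fun τ => F (w τ)) ((inner ℝ v (w' s) : ℝ)) s)
    (hE : F (w t) + (r / 2) * ‖y t‖ ^ 2 = F (w 0) + (r / 2) * ‖y 0‖ ^ 2) :
    (∀ s ∈ Set.Icc (0:ℝ) t, y s = 0) ∧ 0 ∈ D_F (w 0) := by
  have hdiss : ∀ s ∈ Icc 0 t,
      HasDerivAt (fun τ => inertialEnergy F r (w τ) (y τ)) (-(r * ‖y s‖ ^ 2)) s := by
    intro s hs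
    obtain ⟨v, hv, hyv⟩ := hy' s hs
    exact hasDerivAt_inertialEnergy (hw' s hs ▸ hchain s hs v hv) (hy s hs) hyv
  have hflat := hasDerivAt_eq_zero_of_nonpos_of_eq hdiss
    (fun _ _ => neg_nonpos.2 (by positivity)) hE
  have hyIoo : EqOn y 0 (Ioo 0 t) := fun s hs => by simpa [hr.ne'] using hflat s hs
  have hyIcc : EqOn y 0 (Icc 0 t) :=
    hyIoo.of_subset_closure (fun s hs => (hy s hs).continuousAt.continuousWithinAt)
      continuousOn_const Ioo_subset_Icc_self (closure_Ioo ht.ne).symm.subset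
  refine ⟨hyIcc, ?_⟩
  have h0 : (0 : ℝ) ∈ Icc 0 t := left_mem_Icc.2 ht.le
  obtain ⟨v, hv, hyv⟩ := hy' 0 h0
  rw [(hy 0 h0).eq_zero_of_eqOn_Icc ht hyIcc h0, hyIcc h0, Pi.zero_apply, sub_zero] at hyv
  rwa [← hyv] at hv

/-- If a solution of `ẇ = -ry`, `ẏ ∈ D_F(w) - y` starts with `y(0) = 0` and the
energy `E(w,y) = F(w) + (r/2)‖y‖²` is conserved up to some time `t > 0`, then
`y ≡ 0` on `[0,t]` and `0 ∈ D_F(w(0))`. -/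
theorem energy_conservation_implies_critical {p : ℕ}
    (F : EuclideanSpace ℝ (Fin p) → ℝ)
    (D_F : EuclideanSpace ℝ (Fin p) → Set (EuclideanSpace ℝ (Fin p)))
    (hlip : LocallyLipschitz F)
    (r : ℝ) (hr : 0 < r)
    (hclosed : IsClosed {q : EuclideanSpace ℝ (Fin p) × EuclideanSpace ℝ (Fin p) | q.2 ∈ D_F q.1})
    (t : ℝ) (ht : 0 < t)
    (w y w' y' : ℝ → EuclideanSpace ℝ (Fin p))
    (hw : ∀ s ∈ Set.Icc (0:ℝ) t, HasDerivAt w (w' s) s)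
    (hy : ∀ s ∈ Set.Icc (0:ℝ) t, HasDerivAt y (y' s) s)
    (hw' : ∀ s ∈ Set.Icc (0:ℝ) t, w' s = -(r • y s))
    (hy' : ∀ s ∈ Set.Icc (0:ℝ) t, ∃ v ∈ D_F (w s), y' s = v - y s)
    (hchain : ∀ s ∈ Set.Icc (0:ℝ) t, ∀ v ∈ D_F (w s),
      HasDerivAt (fun τ => F (w τ)) ((inner ℝ v (w' s) : ℝ)) s)
    (hy0 : y 0 = 0)
    (hE : F (w t) + (r / 2) * ‖y t‖ ^ 2 = F (w 0) + (r / 2) * ‖y 0‖ ^ 2) :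
    (∀ s ∈ Set.Icc (0:ℝ) t, y s = 0) ∧ 0 ∈ D_F (w 0) :=
  energy_conservation_implies_critical_general F D_F r hr t ht w y w' y' hy hw' hy' hchain hE
end

section
/- Let (y_k) be a sequence in ℝᵖ satisfying y_{k+1} = (1-β_k) y_k + β_k V_{k+1} + β_k u_{k+1}, where β_k ∈ (0,1), sup_k ‖V_{k+1}‖ < ∞, and the series ∑_{i=0}^∞ β_i u_{i+1} converges. Then (y_k) is bounded. -/
open Filter Finset

/-!
Subtracting the partial sums `S k = ∑_{i<k} β_i u_{i+1}` turns the recursion into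
`y_{k+1} - S_{k+1} = (1 - β_k)(y_k - S_k) + β_k (V_{k+1} - S_k)`, an averaging step towards
the bounded sequence `V_{k+1} - S_k` (convergent partial sums are bounded). Averaging steps
never leave a convex set, here a closed ball, so `y_k - S_k`, and hence `y_k`, is bounded.
-/

theorem Convex.mem_of_averaging_step {E : Type*} [AddCommGroup E] [Module ℝ E] {s : Set E}
    (hs : Convex ℝ s) {w z : ℕ → E} {β : ℕ → ℝ} (hβ : ∀ k, β k ∈ Set.Icc (0 : ℝ) 1)
    (hw : ∀ k, w (k + 1) = (1 - β k) • w k + β k • z k) (h0 : w 0 ∈ s) (hz : ∀ k, z k ∈ s) :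
    ∀ k, w k ∈ s := by
  intro k
  induction k with
  | zero => exact h0
  | succ k ih =>
    rw [hw k]
    exact hs ih (hz k) (by linarith [(hβ k).2]) (hβ k).1 (by ring)

theorem sub_partialSum_succ {E : Type*} [AddCommGroup E] [Module ℝ E] {y V u : ℕ → E}
    {β : ℕ → ℝ} (hrec : ∀ k, y (k + 1) = (1 - β k) • y k + β k • V (k + 1) + β k • u (k + 1))
    (k : ℕ) :
    y (k + 1) - ∑ i ∈ range (k + 1), β i • u (i + 1) =
      (1 - β k) • (y k - ∑ i ∈ range k, β i • u (i + 1)) +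
        β k • (V (k + 1) - ∑ i ∈ range k, β i • u (i + 1)) := by
  rw [hrec k, sum_range_succ]
  module

/-- Velocity boundedness: if `y_{k+1} = (1-β_k) y_k + β_k V_{k+1} + β_k u_{k+1}` with
`β_k ∈ (0,1)`, `sup_k ‖V_{k+1}‖ < ∞` and `∑ β_i u_{i+1}` converges, then `(y_k)` is bounded. -/
theorem velocity_boundedness {p : ℕ}
    (y V u : ℕ → EuclideanSpace ℝ (Fin p)) (β : ℕ → ℝ)
    (hβ : ∀ k, β k ∈ Set.Ioo (0:ℝ) 1)
    (hrec : ∀ k, y (k + 1) = (1 - β k) • y k + β k • V (k + 1) + β k • u (k + 1))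
    (hV : ∃ M : ℝ, ∀ k, ‖V (k + 1)‖ ≤ M)
    (hconv : ∃ L : EuclideanSpace ℝ (Fin p),
      Tendsto (fun n => ∑ i ∈ Finset.range n, β i • u (i + 1)) atTop (nhds L)) :
    ∃ C : ℝ, ∀ k, ‖y k‖ ≤ C := by
  obtain ⟨M, hM⟩ := hV
  obtain ⟨L, hL⟩ := hconv
  set S := fun n => ∑ i ∈ range n, β i • u (i + 1)
  obtain ⟨B, hB⟩ := hL.norm.bddAbove_range
  have hSB : ∀ n, ‖S n‖ ≤ B := fun n => hB ⟨n, rfl⟩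
  set R := max ‖y 0‖ (M + B)
  have hball : ∀ k, y k - S k ∈ Metric.closedBall 0 R := by
    refine (convex_closedBall 0 R).mem_of_averaging_step (fun k => Set.Ioo_subset_Icc_self (hβ k))
      (sub_partialSum_succ hrec) ?_ fun k => ?_
    · simp [S, R]
    · rw [mem_closedBall_zero_iff]
      exact (norm_sub_le _ _).trans ((add_le_add (hM k) (hSB k)).trans (le_max_right _ _))
  refine ⟨R + B, fun k => ?_⟩
  calc ‖y k‖ = ‖(y k - S k) + S k‖ := by rw [sub_add_cancel]
    _ ≤ R + B := (norm_add_le _ _).trans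
        (add_le_add (mem_closedBall_zero_iff.mp (hball k)) (hSB k))
end

section
/- Let F : ℝᵖ → ℝ be locally Lipschitz with conservative gradient D_F, and let (w,y) be a solution on ℝ₊ of ẇ = -ry, ẏ ∈ D_F(w) - y (r > 0) such that the trajectory stays in a compact invariant set L on which E(w,y) = F(w) + (r/2)‖y‖² attains its minimum at the initial point (w(0),y(0)). Then 0 ∈ D_F(w(0)) and y(0) = 0. -/
/-!
Along a heavy-ball trajectory `w` is Lipschitz on bounded intervals, so `F ∘ w` is absolutely
continuous, and the chain rule for `D_F`, applied with `v = ẏ + y ∈ D_F(w)`, gives the dissipation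
identity `E(T) - E(0) = -r ∫₀ᵀ ‖y‖²`. Since the trajectory stays in `L`, where `E` is minimal at
the initial point, the integral vanishes for every `T`, so `y ≡ 0` on `[0, ∞)`. Then `ẏ(0) = 0`,
and the inclusion `ẏ(0) + y(0) ∈ D_F(w(0))` becomes `0 ∈ D_F(w(0))`.
-/

open MeasureTheory

/-- A solution of the heavy ball differential inclusion `ẇ = -ry`, `ẏ ∈ D_F(w) - y`. -/
def IsHBSolution {p : ℕ}
    (D_F : EuclideanSpace ℝ (Fin p) → Set (EuclideanSpace ℝ (Fin p)))
    (r : ℝ) (w y : ℝ → EuclideanSpace ℝ (Fin p)) : Prop :=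
  ∃ w' y' : ℝ → EuclideanSpace ℝ (Fin p), ∀ t ∈ Set.Ici (0:ℝ),
    HasDerivAt w (w' t) t ∧ HasDerivAt y (y' t) t ∧
    w' t = -(r • y t) ∧ ∃ v ∈ D_F (w t), y' t = v - y t

open Set Filter Topology
open scoped RealInnerProductSpace Interval

section NormedSpace

variable {E : Type*} [NormedAddCommGroup E] [NormedSpace ℝ E]

/-- Continuing `f` to the left of `a` by its tangent line keeps it differentiable. -/
theorem exists_hasDerivAt_extension_of_hasDerivAt_Ici {f f' : ℝ → E} {a : ℝ}
    (hf : ∀ t ∈ Ici a, HasDerivAt f (f' t) t) :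
    ∃ g g' : ℝ → E, (∀ t, HasDerivAt g (g' t) t) ∧ EqOn g f (Ici a) ∧
      EqOn g' f' (Ici a) := by
  set g : ℝ → E := fun s => if a ≤ s then f s else f a + (s - a) • f' a
  have htangent : ∀ t, HasDerivAt (fun s => f a + (s - a) • f' a) (f' a) t := fun t => by
    simpa using (((hasDerivAt_id t).sub_const a).smul_const (f' a)).const_add (f a)
  refine ⟨g, fun s => if a ≤ s then f' s else f' a, fun t => ?_,
    fun t ht => if_pos ht, fun t ht => if_pos ht⟩
  dsimp only
  rcases lt_trichotomy t a with hta | rfl | hta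
  · rw [if_neg (not_le.2 hta)]
    refine (htangent t).congr_of_eventuallyEq ?_
    filter_upwards [Iio_mem_nhds hta] with s hs
    exact if_neg (not_le.2 hs)
  · rw [if_pos le_rfl]
    have hright : HasDerivWithinAt g (f' t) (Ici t) t :=
      (hf t self_mem_Ici).hasDerivWithinAt.congr (fun s hs => if_pos hs) (if_pos le_rfl)
    have hleft : HasDerivWithinAt g (f' t) (Iic t) t := by
      refine (htangent t).hasDerivWithinAt.congr (fun s hs => ?_) (by simp [g])
      rcases (mem_Iic.1 hs).eq_or_lt with rfl | hst
      · simp [g]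
      · exact if_neg (not_le.2 hst)
    simpa using hleft.union hright
  · rw [if_pos hta.le]
    refine (hf t hta.le).congr_of_eventuallyEq ?_
    filter_upwards [Ioi_mem_nhds hta] with s hs
    exact if_pos (le_of_lt hs)

theorem exists_lipschitzOnWith_Icc_of_hasDerivAt {f f' : ℝ → E} {a b : ℝ}
    (hf : ∀ t ∈ Icc a b, HasDerivAt f (f' t) t) (hf' : ContinuousOn f' (Icc a b)) :
    ∃ K, LipschitzOnWith K f (Icc a b) := by
  obtain ⟨C, hC⟩ := isCompact_Icc.exists_bound_of_continuousOn hf'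
  exact ⟨C.toNNReal, (convex_Icc a b).lipschitzOnWith_of_nnnorm_hasDerivWithin_le
    (fun t ht => (hf t ht).hasDerivWithinAt) fun t ht => by
      simpa [← NNReal.coe_le_coe] using (hC t ht).trans (le_max_left C 0)⟩

end NormedSpace

theorem LocallyLipschitz.exists_lipschitzOnWith_comp {X Y Z : Type*} [PseudoMetricSpace X]
    [PseudoMetricSpace Y] [PseudoMetricSpace Z] {F : Y → Z} {f : X → Y} {s : Set X}
    {K : NNReal} (hF : LocallyLipschitz F) (hf : LipschitzOnWith K f s) (hs : IsCompact s) :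
    ∃ K', LipschitzOnWith K' (F ∘ f) s := by
  obtain ⟨K', hK'⟩ := hF.locallyLipschitzOn.exists_lipschitzOnWith_of_compact
    (hs.image_of_continuousOn hf.continuousOn)
  exact ⟨K' * K, hK'.comp hf (mapsTo_image f s)⟩

theorem eqOn_zero_of_integral_norm_sq_nonpos {E : Type*} [NormedAddCommGroup E] {g : ℝ → E}
    {a : ℝ} (hg : ContinuousOn g (Ici a)) (h : ∀ T ≥ a, ∫ t in a..T, ‖g t‖ ^ 2 ≤ 0) :
    EqOn g 0 (Ici a) := by
  intro t ht
  by_contra hne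
  have hpos : 0 < ∫ s in a..t + 1, ‖g s‖ ^ 2 :=
    intervalIntegral.integral_pos (by linarith [mem_Ici.1 ht])
      ((hg.mono Icc_subset_Ici_self).norm.pow 2) (fun _ _ => sq_nonneg _)
      ⟨t, ⟨ht, by linarith⟩, pow_pos (norm_pos_iff.2 hne) 2⟩
  linarith [h (t + 1) (by linarith [mem_Ici.1 ht])]

section InnerProductSpace

variable {E : Type*} [NormedAddCommGroup E] [InnerProductSpace ℝ E]

/-- The chain-rule characterisation of `D` being a conservative field for `F`. -/
def SatisfiesChainRule (F : E → ℝ) (D : E → Set E) : Prop :=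
  ∀ γ γ' : ℝ → E, (∀ t, HasDerivAt γ (γ' t) t) →
    ∀ᵐ t ∂(volume : Measure ℝ), ∀ v ∈ D (γ t),
      HasDerivAt (fun s => F (γ s)) ((inner ℝ v (γ' t) : ℝ)) t

theorem SatisfiesChainRule.ae_hasDerivAt_comp_of_hasDerivAt_Ici {F : E → ℝ} {D : E → Set E}
    (hD : SatisfiesChainRule F D) {γ γ' : ℝ → E} {a : ℝ}
    (hγ : ∀ t ∈ Ici a, HasDerivAt γ (γ' t) t) :
    ∀ᵐ t, a < t → ∀ v ∈ D (γ t), HasDerivAt (fun s => F (γ s)) ⟪v, γ' t⟫ t := by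
  obtain ⟨g, g', hg, hgγ, hg'γ'⟩ := exists_hasDerivAt_extension_of_hasDerivAt_Ici hγ
  filter_upwards [hD g g' hg] with t ht hat v hv
  have hg_eventually : (fun s => F (g s)) =ᶠ[𝓝 t] fun s => F (γ s) := by
    filter_upwards [Ioi_mem_nhds hat] with s hs
    rw [hgγ (mem_Ioi.1 hs).le]
  rw [← hg'γ' hat.le]
  exact (ht v (hgγ hat.le ▸ hv)).congr_of_eventuallyEq hg_eventually.symm

end InnerProductSpace

noncomputable def hbEnergy {E : Type*} [NormedAddCommGroup E] (F : E → ℝ) (r : ℝ)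
    (q : E × E) : ℝ :=
  F q.1 + r / 2 * ‖q.2‖ ^ 2

namespace IsHBSolution

variable {p : ℕ} {F : EuclideanSpace ℝ (Fin p) → ℝ}
  {D_F : EuclideanSpace ℝ (Fin p) → Set (EuclideanSpace ℝ (Fin p))} {r : ℝ}
  {w y : ℝ → EuclideanSpace ℝ (Fin p)} {t : ℝ}

theorem hasDerivAt_fst (h : IsHBSolution D_F r w y) (ht : 0 ≤ t) :
    HasDerivAt w (-(r • y t)) t := by
  obtain ⟨w', y', hs⟩ := h
  exact (hs t ht).2.2.1 ▸ (hs t ht).1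

theorem hasDerivAt_snd (h : IsHBSolution D_F r w y) (ht : 0 ≤ t) :
    HasDerivAt y (deriv y t) t := by
  obtain ⟨w', y', hs⟩ := h
  exact (hs t ht).2.1.differentiableAt.hasDerivAt

theorem deriv_snd_add_snd_mem (h : IsHBSolution D_F r w y) (ht : 0 ≤ t) :
    deriv y t + y t ∈ D_F (w t) := by
  obtain ⟨w', y', hs⟩ := h
  obtain ⟨-, hy, -, v, hv, hy'⟩ := hs t ht
  rwa [hy.deriv, hy', sub_add_cancel]

theorem continuousOn_snd (h : IsHBSolution D_F r w y) : ContinuousOn y (Ici 0) :=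
  fun _ ht => (h.hasDerivAt_snd ht).continuousAt.continuousWithinAt

theorem exists_lipschitzOnWith_comp_fst (hF : LocallyLipschitz F) (h : IsHBSolution D_F r w y)
    (T : ℝ) : ∃ K, LipschitzOnWith K (fun t => F (w t)) (Icc 0 T) := by
  obtain ⟨K, hK⟩ := exists_lipschitzOnWith_Icc_of_hasDerivAt
    (fun t ht => h.hasDerivAt_fst ht.1)
    ((h.continuousOn_snd.mono Icc_subset_Ici_self).const_smul r).neg
  exact hF.exists_lipschitzOnWith_comp hK isCompact_Icc

theorem ae_hasDerivAt_comp_fst (hD : SatisfiesChainRule F D_F) (h : IsHBSolution D_F r w y) :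
    ∀ᵐ t, 0 < t → HasDerivAt (fun s => F (w s)) (-(r * ⟪deriv y t + y t, y t⟫)) t := by
  filter_upwards [hD.ae_hasDerivAt_comp_of_hasDerivAt_Ici fun t ht => h.hasDerivAt_fst ht]
    with t ht ht0
  simpa [inner_neg_right, real_inner_smul_right] using
    ht ht0 _ (h.deriv_snd_add_snd_mem ht0.le)

theorem hbEnergy_sub_hbEnergy_zero (hF : LocallyLipschitz F) (hD : SatisfiesChainRule F D_F)
    (hr : r ≠ 0) (h : IsHBSolution D_F r w y) {T : ℝ} (hT : 0 ≤ T) :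
    hbEnergy F r (w T, y T) - hbEnergy F r (w 0, y 0) = -(r * ∫ t in 0..T, ‖y t‖ ^ 2) := by
  obtain ⟨K, hK⟩ := h.exists_lipschitzOnWith_comp_fst hF T
  have hac : AbsolutelyContinuousOnInterval (fun t => F (w t)) 0 T :=
    LipschitzOnWith.absolutelyContinuousOnInterval (uIcc_of_le hT ▸ hK)
  have hderiv : ∀ᵐ t ∂volume.restrict (Ι 0 T),
      deriv (fun s => F (w s)) t = -(r * ⟪deriv y t + y t, y t⟫) := by
    filter_upwards [ae_restrict_mem measurableSet_uIoc,
      ae_restrict_of_ae (h.ae_hasDerivAt_comp_fst hD)] with t ht hdt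
    exact (hdt (uIoc_of_le hT ▸ ht).1).deriv
  have hyT : ContinuousOn y (uIcc 0 T) :=
    h.continuousOn_snd.mono (uIcc_of_le hT ▸ Icc_subset_Ici_self)
  have hsq : ∀ t ∈ uIcc 0 T, HasDerivAt (fun s => ‖y s‖ ^ 2) (2 * ⟪y t, deriv y t⟫) t :=
    fun t ht => (h.hasDerivAt_snd (uIcc_of_le hT ▸ ht).1).norm_sq
  -- `ẏ` may be discontinuous; `⟪y, ẏ⟫` is integrable because the chain rule expresses it
  -- through the derivative of the absolutely continuous `F ∘ w`.
  have hint : IntervalIntegrable (fun t => 2 * ⟪y t, deriv y t⟫) volume 0 T := by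
    refine ((hac.intervalIntegrable_deriv.const_mul (-2 / r)).sub
      ((hyT.norm.pow 2).intervalIntegrable.const_mul 2)).congr_ae ?_
    filter_upwards [hderiv] with t ht
    rw [ht, inner_add_left, real_inner_self_eq_norm_sq, real_inner_comm, Pi.pow_apply]
    field_simp
    ring
  calc hbEnergy F r (w T, y T) - hbEnergy F r (w 0, y 0)
      = (F (w T) - F (w 0)) + r / 2 * (‖y T‖ ^ 2 - ‖y 0‖ ^ 2) := by
        simp only [hbEnergy]; ring
    _ = (∫ t in 0..T, deriv (fun s => F (w s)) t) +
          r / 2 * ∫ t in 0..T, 2 * ⟪y t, deriv y t⟫ := by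
        rw [hac.integral_deriv_eq_sub, intervalIntegral.integral_eq_sub_of_hasDerivAt hsq hint]
    _ = ∫ t in 0..T, -(r * ‖y t‖ ^ 2) := by
        rw [← intervalIntegral.integral_const_mul,
          ← intervalIntegral.integral_add hac.intervalIntegrable_deriv (hint.const_mul _)]
        refine intervalIntegral.integral_congr_ae_restrict ?_
        filter_upwards [hderiv] with t ht
        rw [ht, inner_add_left, real_inner_self_eq_norm_sq, real_inner_comm]
        ring
    _ = -(r * ∫ t in 0..T, ‖y t‖ ^ 2) := by
        rw [intervalIntegral.integral_neg, intervalIntegral.integral_const_mul]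

end IsHBSolution

theorem minimal_energy_point_is_critical_general {p : ℕ}
    (F : EuclideanSpace ℝ (Fin p) → ℝ)
    (D_F : EuclideanSpace ℝ (Fin p) → Set (EuclideanSpace ℝ (Fin p)))
    (hlip : LocallyLipschitz F) (r : ℝ) (hr : 0 < r)
    (hchain : ∀ γ γ' : ℝ → EuclideanSpace ℝ (Fin p), (∀ t, HasDerivAt γ (γ' t) t) →
      ∀ᵐ t ∂(volume : Measure ℝ), ∀ v ∈ D_F (γ t),
        HasDerivAt (fun s => F (γ s)) ((inner ℝ v (γ' t) : ℝ)) t)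
    (w y : ℝ → EuclideanSpace ℝ (Fin p))
    (hsol : IsHBSolution D_F r w y)
    (L : Set (EuclideanSpace ℝ (Fin p) × EuclideanSpace ℝ (Fin p)))
    (htraj : ∀ t ≥ (0:ℝ), (w t, y t) ∈ L)
    (hmin : ∀ q ∈ L, F (w 0) + (r / 2) * ‖y 0‖ ^ 2 ≤ F q.1 + (r / 2) * ‖q.2‖ ^ 2) :
    0 ∈ D_F (w 0) ∧ y 0 = 0 := by
  have hdissipated : ∀ T ≥ (0:ℝ), ∫ t in 0..T, ‖y t‖ ^ 2 ≤ 0 := fun T hT => by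
    have hE : hbEnergy F r (w 0, y 0) ≤ hbEnergy F r (w T, y T) := hmin _ (htraj T hT)
    have hdiss := hsol.hbEnergy_sub_hbEnergy_zero hlip hchain hr.ne' hT
    exact nonpos_of_mul_nonpos_right (by linarith) hr
  have hy : EqOn y 0 (Ici 0) :=
    eqOn_zero_of_integral_norm_sq_nonpos hsol.continuousOn_snd hdissipated
  have hy' : deriv y 0 = 0 :=
    (uniqueDiffWithinAt_Ici 0).eq_deriv _ (hsol.hasDerivAt_snd le_rfl).hasDerivWithinAt
      ((hasDerivWithinAt_const 0 _ 0).congr (fun _ ht => hy ht) (hy self_mem_Ici))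
  refine ⟨?_, hy self_mem_Ici⟩
  simpa [hy', hy self_mem_Ici] using hsol.deriv_snd_add_snd_mem le_rfl

/-- If a heavy ball trajectory stays in a compact invariant set `L` on which the
energy `E(w,y) = F(w) + (r/2)‖y‖²` attains its minimum at the initial point, then
the initial point is critical: `0 ∈ D_F(w(0))` and `y(0) = 0`. -/
theorem minimal_energy_point_is_critical {p : ℕ}
    (F : EuclideanSpace ℝ (Fin p) → ℝ)
    (D_F : EuclideanSpace ℝ (Fin p) → Set (EuclideanSpace ℝ (Fin p)))
    (hlip : LocallyLipschitz F) (r : ℝ) (hr : 0 < r)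
    (hclosed : IsClosed {q : EuclideanSpace ℝ (Fin p) × EuclideanSpace ℝ (Fin p) | q.2 ∈ D_F q.1})
    (hne : ∀ x, (D_F x).Nonempty)
    (hchain : ∀ γ γ' : ℝ → EuclideanSpace ℝ (Fin p), (∀ t, HasDerivAt γ (γ' t) t) →
      ∀ᵐ t ∂(volume : Measure ℝ), ∀ v ∈ D_F (γ t),
        HasDerivAt (fun s => F (γ s)) ((inner ℝ v (γ' t) : ℝ)) t)
    (w y : ℝ → EuclideanSpace ℝ (Fin p))
    (hsol : IsHBSolution D_F r w y)
    (L : Set (EuclideanSpace ℝ (Fin p) × EuclideanSpace ℝ (Fin p)))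
    (hLcompact : IsCompact L)
    (htraj : ∀ t ≥ (0:ℝ), (w t, y t) ∈ L)
    (hinv : ∀ w₂ y₂ : ℝ → EuclideanSpace ℝ (Fin p), IsHBSolution D_F r w₂ y₂ →
      (w₂ 0, y₂ 0) ∈ L → ∀ t ≥ (0:ℝ), (w₂ t, y₂ t) ∈ L)
    (hmin : ∀ q ∈ L, F (w 0) + (r / 2) * ‖y 0‖ ^ 2 ≤ F q.1 + (r / 2) * ‖q.2‖ ^ 2) :
    0 ∈ D_F (w 0) ∧ y 0 = 0 :=
  minimal_energy_point_is_critical_general F D_F hlip r hr hchain w y hsol L htraj hmin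
end
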